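/- arXiv:1107.2042 — 3 statements merged into one kernel-verified Lean document; each statement's English description precedes it below -/
import Mathlib

section
/- Let q be a prime, c a positive integer with q ∤ c, and let n, m be integers with q ∤ m. Let q̄ be any integer with q·q̄ ≡ 1 (mod c). Then S(n·q, m; c·q) = − S(n·q̄, m; c). -/
/-- `e(x) = exp(2πi x)`. -/
noncomputable def e (x : ℝ) : ℂ := Complex.exp (2 * Real.pi * Complex.I * x)

/-- The Kloosterman sum `S(m, n; c) = ∑_{h mod c, (h,c)=1} e((m h + n h̄)/c)`,
where `h̄` is the inverse of `h` modulo `c`. -/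
noncomputable def S (m n : ℤ) (c : ℕ) : ℂ :=
  ∑ h ∈ (Finset.range c).filter fun h => Nat.Coprime h c,
    e (((m * (h : ℤ) + n * ((((h : ZMod c)⁻¹).val : ℤ)) : ℤ) : ℝ) / (c : ℝ))

lemma e_add (x y : ℝ) : e (x + y) = e x * e y := by
  simp only [e, ← Complex.exp_add]
  congr 1
  push_cast
  ring

lemma e_int (k : ℤ) : e k = 1 := by
  simp only [e]
  rw [show (2 * (Real.pi : ℂ) * Complex.I * ((k : ℝ) : ℂ)) = (k : ℤ) * (2 * Real.pi * Complex.I) by push_cast; ring]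
  exact Complex.exp_int_mul_two_pi_mul_I k

noncomputable def psi (N : ℕ) (x : ZMod N) : ℂ := e ((x.val : ℝ) / N)

lemma psi_intCast (N : ℕ) [NeZero N] (a : ℤ) : psi N ((a : ZMod N)) = e ((a : ℝ) / N) := by
  have hv : (((a : ZMod N).val : ℤ)) = a % N := ZMod.val_intCast a
  have hN : (N : ℝ) ≠ 0 := Nat.cast_ne_zero.mpr (NeZero.ne N)
  have key : (a : ℝ) / N = (((a : ZMod N).val : ℤ) : ℝ) / N + ((a / N : ℤ) : ℝ) := by
    rw [hv]
    have h2 : ((N : ℤ) * (a / N) + a % N : ℤ) = a := Int.mul_ediv_add_emod a N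
    have h3 : ((N : ℝ) * ((a / N : ℤ) : ℝ) + ((a % N : ℤ) : ℝ)) = (a : ℝ) := by
      exact_mod_cast congrArg (fun z : ℤ => (z : ℝ)) h2
    field_simp
    linarith [h3]
  rw [psi, key, e_add, e_int, mul_one]
  norm_num

lemma S_eq (m n : ℤ) (c : ℕ) [NeZero c] :
    S m n c = ∑ u : (ZMod c)ˣ, psi c ((m : ZMod c) * ↑u + (n : ZMod c) * ↑(u⁻¹)) := by
  rw [S]
  refine Finset.sum_bij' (i := fun h hh => ZMod.unitOfCoprime h (Finset.mem_filter.mp hh).2)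
    (j := fun u _ => (u : ZMod c).val) (fun a ha => Finset.mem_univ _)
    (fun u _ => ?_) (fun a ha => ?_) (fun u _ => ?_) (fun a ha => ?_)
  · exact Finset.mem_filter.mpr ⟨Finset.mem_range.mpr (ZMod.val_lt _), ZMod.val_coe_unit_coprime u⟩
  · simp only [ZMod.coe_unitOfCoprime]
    exact ZMod.val_natCast_of_lt (Finset.mem_range.mp (Finset.mem_filter.mp ha).1)
  · apply Units.ext
    simp [ZMod.coe_unitOfCoprime, ZMod.natCast_val, ZMod.cast_id]
  · have h1 : ((ZMod.unitOfCoprime a (Finset.mem_filter.mp ha).2 : ZMod c)) = (a : ZMod c) :=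
      ZMod.coe_unitOfCoprime _ _
    have h2 : (((ZMod.unitOfCoprime a (Finset.mem_filter.mp ha).2)⁻¹ : (ZMod c)ˣ) : ZMod c) = ((a : ZMod c))⁻¹ := by
      rw [← ZMod.inv_coe_unit, h1]
    rw [← psi_intCast (N := c) (a := m * (a : ℤ) + n * ((((a : ZMod c)⁻¹).val : ℤ)))]
    congr 1
    push_cast
    rw [h1, h2, ZMod.natCast_val, ZMod.cast_id]

lemma psi_sum_zero (q : ℕ) [NeZero q] (hq : 1 < q) : ∑ x : ZMod q, psi q x = 0 := by
  have hq0 : (q : ℂ) ≠ 0 := Nat.cast_ne_zero.mpr (by omega)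
  have step : ∑ x : ZMod q, psi q x = ∑ k ∈ Finset.range q, Complex.exp (2 * Real.pi * Complex.I / q) ^ k := by
    refine Finset.sum_bij' (i := fun x _ => x.val) (j := fun k _ => (k : ZMod q))
      (fun x _ => Finset.mem_range.mpr (ZMod.val_lt x)) (fun k _ => Finset.mem_univ _)
      (fun x _ => by simp [ZMod.natCast_val, ZMod.cast_id])
      (fun k hk => ZMod.val_natCast_of_lt (Finset.mem_range.mp hk))
      (fun x _ => ?_)
    rw [psi, ← Complex.exp_nat_mul, e]
    congr 1
    push_cast
    field_simp
  rw [step]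
  exact (Complex.isPrimitiveRoot_exp q (by omega)).geom_sum_eq_zero hq

lemma psi_units_sum (q : ℕ) [NeZero q] (hq : q.Prime) : ∑ b : (ZMod q)ˣ, psi q ↑b = -1 := by
  haveI : Fact q.Prime := ⟨hq⟩
  have h0 : ∑ x : ZMod q, psi q x = 0 := psi_sum_zero q hq.one_lt
  have hsplit : psi q 0 + ∑ x ∈ Finset.univ.erase (0 : ZMod q), psi q x = ∑ x : ZMod q, psi q x :=
    Finset.add_sum_erase _ _ (Finset.mem_univ 0)
  have hunits : ∑ b : (ZMod q)ˣ, psi q ↑b = ∑ x ∈ Finset.univ.erase (0 : ZMod q), psi q x := by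
    refine Finset.sum_bij (i := fun b _ => (b : ZMod q)) (fun b _ => ?_) (fun b1 _ b2 _ h => Units.ext h)
      (fun x hx => ?_) (fun _ _ => rfl)
    · exact Finset.mem_erase.mpr ⟨b.ne_zero, Finset.mem_univ _⟩
    · have hx0 : x ≠ 0 := (Finset.mem_erase.mp hx).1
      exact ⟨(isUnit_iff_ne_zero.mpr hx0).unit, Finset.mem_univ _, (isUnit_iff_ne_zero.mpr hx0).unit_spec⟩
  have hpsi0 : psi q (0 : ZMod q) = 1 := by
    simp [psi, ZMod.val_zero]
    simpa using (by simp [e] : e 0 = 1)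
  rw [hunits]
  have := hsplit.trans h0
  rw [hpsi0] at this
  linear_combination this

lemma psi_twisted_units_sum (q : ℕ) [NeZero q] (hq : q.Prime) (w : ZMod q) (hw : w ≠ 0) :
    ∑ b : (ZMod q)ˣ, psi q (w * ↑b⁻¹) = -1 := by
  haveI : Fact q.Prime := ⟨hq⟩
  set wu : (ZMod q)ˣ := (isUnit_iff_ne_zero.mpr hw).unit with hwu
  have hcoe : (wu : ZMod q) = w := (isUnit_iff_ne_zero.mpr hw).unit_spec
  let σ : (ZMod q)ˣ ≃ (ZMod q)ˣ := (Equiv.inv (ZMod q)ˣ).trans (Equiv.mulLeft wu)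
  have h1 : ∀ b : (ZMod q)ˣ, psi q (w * ↑b⁻¹) = psi q ↑(σ b) := by
    intro b
    have : ↑(σ b) = w * ↑b⁻¹ := by
      show ((wu * b⁻¹ : (ZMod q)ˣ) : ZMod q) = w * ↑b⁻¹
      rw [Units.val_mul, hcoe]
    rw [this]
  simp_rw [h1]
  rw [Equiv.sum_comp σ (fun b => psi q (↑b : ZMod q))]
  exact psi_units_sum q hq

lemma psi_split (c q : ℕ) [NeZero c] [NeZero q] (qbar cbar : ℤ)
    (key : (q : ℤ) * qbar + (c : ℤ) * cbar = 1) (z : ZMod (c * q)) :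
    psi (c * q) z =
      psi c ((qbar : ZMod c) * ((z.val : ℕ) : ZMod c)) *
        psi q ((cbar : ZMod q) * ((z.val : ℕ) : ZMod q)) := by
  haveI : NeZero (c * q) := ⟨mul_ne_zero (NeZero.ne c) (NeZero.ne q)⟩
  have h1 : ((qbar : ZMod c) * ((z.val : ℕ) : ZMod c)) = ((qbar * z.val : ℤ) : ZMod c) := by
    push_cast; ring
  have h2 : ((cbar : ZMod q) * ((z.val : ℕ) : ZMod q)) = ((cbar * z.val : ℤ) : ZMod q) := by
    push_cast; ring
  rw [h1, h2, psi_intCast, psi_intCast, psi, ← e_add]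
  congr 1
  have hc : (c : ℝ) ≠ 0 := Nat.cast_ne_zero.mpr (NeZero.ne c)
  have hq : (q : ℝ) ≠ 0 := Nat.cast_ne_zero.mpr (NeZero.ne q)
  have keyR : (q : ℝ) * (qbar : ℝ) + (c : ℝ) * (cbar : ℝ) = 1 := by exact_mod_cast key
  have e1 : ((qbar * (z.val : ℤ) : ℤ) : ℝ) = (qbar : ℝ) * ((z.val : ℕ) : ℝ) := by
    rw [Int.cast_mul, Int.cast_natCast]
  have e2 : ((cbar * (z.val : ℤ) : ℤ) : ℝ) = (cbar : ℝ) * ((z.val : ℕ) : ℝ) := by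
    rw [Int.cast_mul, Int.cast_natCast]
  rw [e1, e2, Nat.cast_mul]
  generalize ((z.val : ℕ) : ℝ) = v
  field_simp
  linear_combination (-v) * keyR

/-- For a prime `q`, `q ∤ c`, `q ∤ m`: `S(nq, m; cq) = -S(n q̄, m; c)`
where `q q̄ ≡ 1 (mod c)`. -/
theorem kloosterman_prime_twist
    (q : ℕ) (hq : q.Prime) (c : ℕ) (hc : 0 < c) (hqc : ¬ q ∣ c)
    (n m : ℤ) (hm : ¬ (q : ℤ) ∣ m) (qbar : ℤ)
    (hqbar : (q : ℤ) * qbar ≡ 1 [ZMOD (c : ℤ)]) :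
    S (n * q) m (c * q) = - S (n * qbar) m c := by
  haveI : NeZero c := ⟨hc.ne'⟩
  haveI : NeZero q := ⟨hq.ne_zero⟩
  haveI : NeZero (c * q) := ⟨mul_ne_zero hc.ne' hq.ne_zero⟩
  haveI : Fact q.Prime := ⟨hq⟩
  -- the exact Bezout identity
  obtain ⟨s, hs⟩ := (Int.ModEq.dvd hqbar)
  set cbar : ℤ := s with hcbar
  have key : (q : ℤ) * qbar + (c : ℤ) * cbar = 1 := by
    have : (1 : ℤ) - (q : ℤ) * qbar = (c : ℤ) * s := hs
    linarith
  have hq1 : (((q : ℤ) * qbar : ℤ) : ZMod c) = 1 := by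
    have : ((q : ℤ) * qbar : ℤ) = 1 - (c : ℤ) * cbar := by linarith
    rw [this]
    push_cast
    simp [ZMod.natCast_self]
  -- the CRT bijection on units
  have hcq : Nat.Coprime c q := ((hq.coprime_iff_not_dvd).mpr hqc).symm
  set f : ZMod (c * q) →+* ZMod c := ZMod.castHom (dvd_mul_right c q) (ZMod c) with hf
  set g : ZMod (c * q) →+* ZMod q := ZMod.castHom (dvd_mul_left q c) (ZMod q) with hg
  have hbij : Function.Bijective (fun z : ZMod (c * q) => ((f z, g z) : ZMod c × ZMod q)) := by
    have heq : (fun z : ZMod (c * q) => ((f z, g z) : ZMod c × ZMod q)) =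
        ⇑(ZMod.chineseRemainder hcq) := by
      funext z
      have h0 : (ZMod.chineseRemainder hcq) z = ((z.val : ℕ) : ZMod c × ZMod q) := by
        have h1 : (ZMod.chineseRemainder hcq) z = ZMod.cast z := rfl
        rw [h1, ← ZMod.natCast_val]
      rw [h0]
      apply Prod.ext
      · rw [hf]
        show ZMod.cast z = _
        rw [← ZMod.natCast_val]
        exact (Prod.fst_natCast _).symm
      · rw [hg]
        show ZMod.cast z = _
        rw [← ZMod.natCast_val]
        exact (Prod.snd_natCast _).symm
    rw [heq]
    exact (ZMod.chineseRemainder hcq).bijective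
  set φ : (ZMod (c * q))ˣ → (ZMod c)ˣ × (ZMod q)ˣ :=
    fun u => (Units.map f.toMonoidHom u, Units.map g.toMonoidHom u) with hφ
  have hφbij : Function.Bijective φ := by
    constructor
    · intro u v huv
      apply Units.ext
      apply hbij.1
      have h1 : Units.map f.toMonoidHom u = Units.map f.toMonoidHom v := congrArg Prod.fst huv
      have h2 : Units.map g.toMonoidHom u = Units.map g.toMonoidHom v := congrArg Prod.snd huv
      show ((f ↑u, g ↑u) : ZMod c × ZMod q) = (f ↑v, g ↑v)
      have h1' : f ↑u = f ↑v := congrArg Units.val h1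
      have h2' : g ↑u = g ↑v := congrArg Units.val h2
      exact Prod.ext h1' h2'
    · rintro ⟨a, b⟩
      obtain ⟨z, hz⟩ := hbij.2 ((a : ZMod c), (b : ZMod q))
      obtain ⟨w, hw⟩ := hbij.2 (((a⁻¹ : (ZMod c)ˣ) : ZMod c), ((b⁻¹ : (ZMod q)ˣ) : ZMod q))
      have hz1 : f z = (a : ZMod c) := congrArg Prod.fst hz
      have hz2 : g z = (b : ZMod q) := congrArg Prod.snd hz
      have hw1 : f w = ((a⁻¹ : (ZMod c)ˣ) : ZMod c) := congrArg Prod.fst hw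
      have hw2 : g w = ((b⁻¹ : (ZMod q)ˣ) : ZMod q) := congrArg Prod.snd hw
      have hzw : z * w = 1 := by
        apply hbij.1
        show ((f (z * w), g (z * w)) : ZMod c × ZMod q) = (f 1, g 1)
        rw [map_mul, map_mul, map_one, map_one, hz1, hz2, hw1, hw2, Units.mul_inv, Units.mul_inv]
      refine ⟨⟨z, w, hzw, by rw [mul_comm w z]; exact hzw⟩, ?_⟩
      apply Prod.ext
      · apply Units.ext
        exact hz1
      · apply Units.ext
        exact hz2
  -- per-term identity
  set A : (ZMod c)ˣ → ℂ :=
    fun a => psi c ((n : ZMod c) * ↑a + ((m * qbar : ℤ) : ZMod c) * ↑a⁻¹) with hA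
  set B : (ZMod q)ˣ → ℂ :=
    fun b => psi q (((m * cbar : ℤ) : ZMod q) * ↑b⁻¹) with hB
  rw [S_eq (n * (q : ℤ)) m (c * q)]
  have hterm : ∀ u : (ZMod (c * q))ˣ,
      psi (c * q) (((n * q : ℤ) : ZMod (c * q)) * ↑u + ((m : ℤ) : ZMod (c * q)) * ↑(u⁻¹))
        = A (φ u).1 * B (φ u).2 := by
    intro u
    set z : ZMod (c * q) := ((n * q : ℤ) : ZMod (c * q)) * ↑u + ((m : ℤ) : ZMod (c * q)) * ↑(u⁻¹) with hz
    rw [psi_split c q qbar cbar key z]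
    have hfz : ((z.val : ℕ) : ZMod c) = f z := by
      rw [ZMod.natCast_val, ZMod.castHom_apply]
    have hgz : ((z.val : ℕ) : ZMod q) = g z := by
      rw [ZMod.natCast_val, ZMod.castHom_apply]
    have hfu : ((φ u).1 : ZMod c) = f ↑u := rfl
    have hfui : (((φ u).1⁻¹ : (ZMod c)ˣ) : ZMod c) = f ↑(u⁻¹) := by
      show (((Units.map f.toMonoidHom u)⁻¹ : (ZMod c)ˣ) : ZMod c) = _
      rw [← map_inv (Units.map f.toMonoidHom) u]
      rfl
    have hgu : ((φ u).2 : ZMod q) = g ↑u := rfl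
    have hgui : (((φ u).2⁻¹ : (ZMod q)ˣ) : ZMod q) = g ↑(u⁻¹) := by
      show (((Units.map g.toMonoidHom u)⁻¹ : (ZMod q)ˣ) : ZMod q) = _
      rw [← map_inv (Units.map g.toMonoidHom) u]
      rfl
    have hfz2 : f z = ((n * q : ℤ) : ZMod c) * f ↑u + ((m : ℤ) : ZMod c) * f ↑(u⁻¹) := by
      rw [hz]
      push_cast [map_mul, map_add, map_intCast, map_natCast]
      ring
    have hgz2 : g z = ((n * q : ℤ) : ZMod q) * g ↑u + ((m : ℤ) : ZMod q) * g ↑(u⁻¹) := by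
      rw [hz]
      push_cast [map_mul, map_add, map_intCast, map_natCast]
      ring
    congr 1
    · -- c-factor
      rw [hA, hfz, hfz2, ← hfu, ← hfui]
      congr 1
      have hq1' : ((q : ℕ) : ZMod c) * ((qbar : ℤ) : ZMod c) = 1 := by
        exact_mod_cast hq1
      push_cast
      linear_combination (((n : ℤ) : ZMod c) * (((φ u).1 : (ZMod c)ˣ) : ZMod c)) * hq1'
    · -- q-factor
      rw [hB, hgz, hgz2, ← hgui]
      congr 1
      have hqq : ((q : ℕ) : ZMod q) = 0 := ZMod.natCast_self q
      push_cast
      linear_combination (((n : ℤ) : ZMod q) * (g ↑u) * ((cbar : ℤ) : ZMod q)) * hqq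
  calc ∑ u : (ZMod (c * q))ˣ,
        psi (c * q) (((n * q : ℤ) : ZMod (c * q)) * ↑u + ((m : ℤ) : ZMod (c * q)) * ↑(u⁻¹))
      = ∑ u : (ZMod (c * q))ˣ, A (φ u).1 * B (φ u).2 := by
        exact Finset.sum_congr rfl (fun u _ => hterm u)
    _ = ∑ p : (ZMod c)ˣ × (ZMod q)ˣ, A p.1 * B p.2 := by
        exact Fintype.sum_bijective φ hφbij _ _ (fun u => rfl)
    _ = (∑ a : (ZMod c)ˣ, A a) * (∑ b : (ZMod q)ˣ, B b) := by
        rw [Finset.sum_mul_sum]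
        exact Fintype.sum_prod_type _
    _ = (∑ a : (ZMod c)ˣ, A a) * (-1) := by
        congr 1
        apply psi_twisted_units_sum q hq
        rw [Ne, ZMod.intCast_zmod_eq_zero_iff_dvd]
        intro hdvd
        rcases ((Nat.prime_iff_prime_int.mp hq).dvd_mul.mp hdvd) with h | h
        · exact hm h
        · have : (q : ℤ) ∣ 1 := by
            have : (q : ℤ) ∣ (q : ℤ) * qbar + (c : ℤ) * cbar :=
              Dvd.dvd.add (dvd_mul_right _ _) (Dvd.dvd.mul_left h _)
            rwa [key] at this
          have := Int.le_of_dvd one_pos this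
          have hq2 : (2 : ℤ) ≤ (q : ℤ) := by exact_mod_cast hq.two_le
          omega
    _ = - S (n * qbar) m c := by
        rw [S_eq]
        have hmul : ((qbar : ℤ) : ZMod c) * (((q : ℕ) : ℤ) : ZMod c) = 1 := by
          rw [mul_comm]
          push_cast at hq1 ⊢
          exact hq1
        set qb : (ZMod c)ˣ := Units.mkOfMulEqOne _ _ hmul with hqb
        have hqbcoe : (qb : ZMod c) = ((qbar : ℤ) : ZMod c) := rfl
        have hqbinv : ((qb⁻¹ : (ZMod c)ˣ) : ZMod c) = (((q : ℕ) : ℤ) : ZMod c) := by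
          have h1 : qb⁻¹ = Units.mkOfMulEqOne _ _ (by rw [mul_comm]; exact hmul) := by
            rw [inv_eq_iff_mul_eq_one]
            apply Units.ext
            rw [Units.val_mul]
            show ((qbar : ℤ) : ZMod c) * (((q : ℕ) : ℤ) : ZMod c) = 1
            exact hmul
          rw [h1]
          rfl
        rw [mul_neg_one, neg_inj, ← Equiv.sum_comp (Equiv.mulLeft qb) A]
        apply Finset.sum_congr rfl
        intro u _
        have hcoe1 : ((Equiv.mulLeft qb u : (ZMod c)ˣ) : ZMod c) = (qb : ZMod c) * ↑u := rfl
        have hcoe2 : (((Equiv.mulLeft qb u : (ZMod c)ˣ)⁻¹ : (ZMod c)ˣ) : ZMod c)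
            = ((u⁻¹ : (ZMod c)ˣ) : ZMod c) * ((qb⁻¹ : (ZMod c)ˣ) : ZMod c) := by
          show (((qb * u)⁻¹ : (ZMod c)ˣ) : ZMod c) = _
          rw [mul_inv_rev, Units.val_mul]
        rw [hA]
        show psi c ((n : ZMod c) * ↑(Equiv.mulLeft qb u) + ((m * qbar : ℤ) : ZMod c) * ↑(Equiv.mulLeft qb u)⁻¹) = _
        rw [hcoe1, hcoe2, hqbcoe, hqbinv]
        congr 1
        push_cast
        push_cast at hmul
        linear_combination ((m : ZMod c) * ((u⁻¹ : (ZMod c)ˣ) : ZMod c)) * hmul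
end

section
/- Let q and w be coprime positive integers and let n, a be integers. Let q̄ be any integer with q·q̄ ≡ 1 (mod w). Then S(n, q·a; q·w) = S(0, n; q) · S(n·q̄, a; w). (Here S(0, n; q) = ∑_{h mod q, gcd(h,q)=1} e(n·h̄/q) is a Ramanujan sum.) -/
open ZMod

lemma e_intCast_div (c : ℕ) [NeZero c] (k : ℤ) : e (k / c) = stdAddChar (k : ZMod c) := by
  rw [stdAddChar_coe, e]
  push_cast
  ring_nf

lemma S_modulus_zero (m n : ℤ) : S m n 0 = 0 := by
  simp [S]

lemma S_eq_sum_units (m n : ℤ) (c : ℕ) [NeZero c] :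
    S m n c = ∑ u : (ZMod c)ˣ,
      stdAddChar ((m * (u : ZMod c) + n * ((u⁻¹ : (ZMod c)ˣ) : ZMod c) : ZMod c)) := by
  refine Finset.sum_bij' (fun h hh => unitOfCoprime h (Finset.mem_filter.1 hh).2)
    (fun u _ => (u : ZMod c).val) (fun _ _ => Finset.mem_univ _)
    (fun u _ => Finset.mem_filter.2 ⟨Finset.mem_range.2 (val_lt _), val_coe_unit_coprime u⟩)
    (fun h hh => by simp [val_cast_of_lt (Finset.mem_range.1 (Finset.mem_filter.1 hh).1)])
    (fun u _ => Units.ext (natCast_zmod_val _)) (fun h _ => ?_)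
  rw [e_intCast_div]
  push_cast
  simp [← inv_coe_unit]

lemma stdAddChar_intCast_eq_of_mul_eq {N M L : ℕ} [NeZero N] [NeZero L] (h : N * M = L)
    (j : ℤ) : stdAddChar (j : ZMod N) = stdAddChar ((M * j : ℤ) : ZMod L) := by
  subst h
  have hM : (M : ℂ) ≠ 0 := by exact_mod_cast right_ne_zero_of_mul (NeZero.ne (N * M))
  rw [stdAddChar_coe, stdAddChar_coe]
  push_cast
  rw [mul_comm (M : ℂ), ← mul_assoc, mul_div_mul_right _ _ hM]

lemma stdAddChar_eq_mul_of_coprime {q w : ℕ} [NeZero q] [NeZero w] (hqw : q.Coprime w)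
    {wbar : ZMod q} {qbar : ZMod w} (hw : w * wbar = 1) (hq : q * qbar = 1) (x : ZMod (q * w)) :
    stdAddChar x = stdAddChar (wbar * cast x) * stdAddChar (qbar * cast x) := by
  obtain ⟨wbar, rfl⟩ := intCast_surjective wbar
  obtain ⟨qbar, rfl⟩ := intCast_surjective qbar
  obtain ⟨k, rfl⟩ := intCast_surjective x
  have hone : ((w * wbar + q * qbar : ℤ) : ZMod (q * w)) = 1 := by
    refine (chineseRemainder hqw).injective (Prod.ext ?_ ?_)
    · simpa [chineseRemainder, Prod.fst_zmod_cast, cast_intCast (dvd_mul_right q w)] using hw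
    · simpa [chineseRemainder, Prod.snd_zmod_cast, cast_intCast (dvd_mul_left w q)] using hq
  rw [cast_intCast (dvd_mul_right q w), cast_intCast (dvd_mul_left w q), ← Int.cast_mul,
    ← Int.cast_mul, stdAddChar_intCast_eq_of_mul_eq (L := q * w) rfl,
    stdAddChar_intCast_eq_of_mul_eq (L := q * w) (mul_comm w q), ← AddChar.map_add_eq_mul]
  congr 1
  rw [← mul_one (k : ZMod (q * w)), ← hone]
  push_cast
  ring

lemma S_zero_eq_sum_units_mul {q : ℕ} [NeZero q] (n : ℤ) {t : ZMod q} (ht : IsUnit t) :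
    S 0 n q = ∑ v : (ZMod q)ˣ, stdAddChar ((n : ZMod q) * t * (v : ZMod q)) := by
  obtain ⟨t, rfl⟩ := ht
  rw [S_eq_sum_units, ← ((Equiv.mulLeft t).trans (Equiv.inv _)).sum_comp]
  simp [mul_assoc]

lemma sum_units_zmod_mul_eq_mul_sum {q w : ℕ} [NeZero q] [NeZero w] (hqw : q.Coprime w)
    {R : Type*} [CommSemiring R] (f : (ZMod q)ˣ → R) (g : (ZMod w)ˣ → R) :
    ∑ u : (ZMod (q * w))ˣ, f (Units.map (castHom (dvd_mul_right q w) (ZMod q)) u) *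
      g (Units.map (castHom (dvd_mul_left w q) (ZMod w)) u) = (∑ v, f v) * ∑ v, g v := by
  rw [Finset.sum_mul_sum, ← Fintype.sum_prod_type']
  exact Fintype.sum_equiv ((Units.mapEquiv (chineseRemainder hqw).toMulEquiv).trans
    MulEquiv.prodUnits).toEquiv _ _ fun u => by
      congr 2 <;> ext <;>
        simp [chineseRemainder, MulEquiv.prodUnits, Prod.fst_zmod_cast, Prod.snd_zmod_cast]

theorem kloosterman_ramanujan_split_general
    (q w : ℕ) (hqw : Nat.Coprime q w)
    (n a : ℤ) (qbar : ℤ) (hqbar : (q : ℤ) * qbar ≡ 1 [ZMOD (w : ℤ)]) :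
    S n ((q : ℤ) * a) (q * w) = S 0 n q * S (n * qbar) a w := by
  rcases eq_or_ne q 0 with rfl | hq0
  · simp [S_modulus_zero]
  rcases eq_or_ne w 0 with rfl | hw0
  · simp [S_modulus_zero]
  have : NeZero q := ⟨hq0⟩
  have : NeZero w := ⟨hw0⟩
  have hw : (w : ZMod q) * (w : ZMod q)⁻¹ = 1 := coe_mul_inv_eq_one w hqw.symm
  have hq : (q : ZMod w) * qbar = 1 := by
    exact_mod_cast (intCast_eq_intCast_iff _ _ _).2 hqbar
  rw [S_zero_eq_sum_units_mul n (IsUnit.of_mul_eq_one_right _ hw), S_eq_sum_units,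
    S_eq_sum_units, ← sum_units_zmod_mul_eq_mul_sum hqw]
  refine Fintype.sum_congr _ _ fun u => ?_
  rw [stdAddChar_eq_mul_of_coprime hqw hw hq]
  congr 1 <;> congr 1
  · simp only [Int.cast_mul, Int.cast_natCast, dvd_mul_right, cast_add, cast_mul, cast_intCast,
      cast_natCast, CharP.cast_eq_zero, zero_mul, add_zero, Units.coe_map, MonoidHom.coe_coe, castHom_apply]
    ring
  · simp only [Int.cast_mul, Int.cast_natCast, dvd_mul_left, cast_add, cast_mul, cast_intCast,
      cast_natCast, Units.coe_map, MonoidHom.coe_coe, castHom_apply, Units.coe_map_inv]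
    linear_combination (a * cast ((u⁻¹ : (ZMod (q * w))ˣ) : ZMod (q * w)) : ZMod w) * hq

/-- For coprime `q, w`: `S(n, q a; q w) = S(0, n; q) ⬝ S(n q̄, a; w)`
where `q q̄ ≡ 1 (mod w)`. The factor `S(0, n; q)` is a Ramanujan sum. -/
theorem kloosterman_ramanujan_split
    (q w : ℕ) (hqpos : 0 < q) (hwpos : 0 < w) (hqw : Nat.Coprime q w)
    (n a : ℤ) (qbar : ℤ) (hqbar : (q : ℤ) * qbar ≡ 1 [ZMOD (w : ℤ)]) :
    S n ((q : ℤ) * a) (q * w) = S 0 n q * S (n * qbar) a w :=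
  kloosterman_ramanujan_split_general q w hqw n a qbar hqbar
end

section
/- Mellin transform decay via repeated integration by parts: let B be a positive integer and let W : ℝ → ℂ be a smooth function whose support is contained in [1, 2]. Then for every complex number s = σ + i t with s ∉ {1, 2, …, B}, one has |∫_1^2 x^{−s} W(x) dx| ≤ (1 + 2^{B−σ}) · (sup_{x ∈ [1,2]} |W^{(B)}(x)|) / ∏_{j=1}^{B} |j − s|. In particular, for each fixed σ and B the integral is O_{B,σ}(|t|^{−B} · sup |W^{(B)}|) as |t| → ∞. -/
open MeasureTheory intervalIntegral Set Filter Topology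

private lemma aux_prod_Icc_range {M : Type*} [CommMonoid M] (f : ℕ → M) (B : ℕ) :
    ∏ j ∈ Finset.Icc 1 B, f j = ∏ j ∈ Finset.range B, f (j + 1) := by
  induction B with
  | zero => simp
  | succ n ih =>
      rw [Finset.prod_Icc_succ_top (Nat.le_add_left 1 n), ih, Finset.prod_range_succ]

private lemma aux_boundary_zero {W : ℝ → ℂ} (hc : Continuous W)
    (hsupp : Function.support W ⊆ Set.Icc 1 2) : W 1 = 0 ∧ W 2 = 0 := by
  constructor
  · have h1 : Tendsto W (𝓝[<] (1:ℝ)) (𝓝 (W 1)) :=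
      (hc.tendsto 1).mono_left nhdsWithin_le_nhds
    have h2 : Tendsto W (𝓝[<] (1:ℝ)) (𝓝 0) := by
      refine Tendsto.congr' ?_ tendsto_const_nhds
      filter_upwards [self_mem_nhdsWithin] with x hx
      have hx' : x ∉ Set.Icc (1:ℝ) 2 := by
        simp only [Set.mem_Iio] at hx
        simp only [Set.mem_Icc, not_and_or, not_le]
        exact Or.inl hx
      exact (Function.notMem_support.mp (fun h => hx' (hsupp h))).symm
    exact tendsto_nhds_unique h1 h2
  · have h1 : Tendsto W (𝓝[>] (2:ℝ)) (𝓝 (W 2)) :=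
      (hc.tendsto 2).mono_left nhdsWithin_le_nhds
    have h2 : Tendsto W (𝓝[>] (2:ℝ)) (𝓝 0) := by
      refine Tendsto.congr' ?_ tendsto_const_nhds
      filter_upwards [self_mem_nhdsWithin] with x hx
      have hx' : x ∉ Set.Icc (1:ℝ) 2 := by
        simp only [Set.mem_Ioi] at hx
        simp only [Set.mem_Icc, not_and_or, not_le]
        exact Or.inr hx
      exact (Function.notMem_support.mp (fun h => hx' (hsupp h))).symm
    exact tendsto_nhds_unique h1 h2

private lemma aux_support_deriv {W : ℝ → ℂ}
    (hsupp : Function.support W ⊆ Set.Icc 1 2) :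
    Function.support (deriv W) ⊆ Set.Icc 1 2 := by
  intro x hx
  by_contra hxn
  apply hx
  have hx12 : x < 1 ∨ 2 < x := by
    by_contra hcon
    push_neg at hcon
    exact hxn (Set.mem_Icc.mpr hcon)
  have hW0 : W =ᶠ[𝓝 x] (fun _ => (0:ℂ)) := by
    rcases hx12 with h | h
    · filter_upwards [Iio_mem_nhds h] with y hy
      exact Function.notMem_support.mp fun hm => by
        have := hsupp hm; simp [Set.mem_Icc] at this; exact absurd this.1 (not_le.mpr hy)
    · filter_upwards [Ioi_mem_nhds h] with y hy
      exact Function.notMem_support.mp fun hm => by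
        have := hsupp hm; simp [Set.mem_Icc] at this; exact absurd this.2 (not_le.mpr hy)
  rw [hW0.deriv_eq]
  exact deriv_const _ _

/-- single integration by parts step -/
private lemma aux_ibp (W : ℝ → ℂ) (hW : ContDiff ℝ ((⊤:ℕ∞):WithTop ℕ∞) W)
    (h1 : W 1 = 0) (h2 : W 2 = 0) (s : ℂ) (hs : s ≠ 1) :
    ∫ x in (1:ℝ)..2, (x:ℂ) ^ (-s) * W x
      = (s - 1)⁻¹ * ∫ x in (1:ℝ)..2, (x:ℂ) ^ ((1:ℂ) - s) * deriv W x := by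
  have hs' : -s ≠ -1 := fun h => hs (by simpa using congrArg Neg.neg h)
  have key := intervalIntegral.integral_mul_deriv_eq_deriv_mul
    (u := fun x : ℝ => (x:ℂ) ^ (-s + 1) / (-s + 1)) (u' := fun x : ℝ => (x:ℂ) ^ (-s))
    (v := W) (v' := deriv W) (a := 1) (b := 2)
    (fun x hx => by
      have hx0 : x ≠ 0 := by
        rw [Set.uIcc_of_le (by norm_num)] at hx
        exact ne_of_gt (lt_of_lt_of_le one_pos hx.1)
      exact hasDerivAt_ofReal_cpow_const' hx0 hs')
    (fun x _ => (hW.differentiable (by simp) x).hasDerivAt)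
    (by
      apply ContinuousOn.intervalIntegrable
      apply ContinuousOn.cpow_const Complex.continuous_ofReal.continuousOn
      intro x hx
      rw [Set.uIcc_of_le (by norm_num : (1:ℝ) ≤ 2)] at hx
      exact Or.inl (by simpa using lt_of_lt_of_le one_pos hx.1))
    ((contDiff_infty_iff_deriv.mp hW).2.continuous.intervalIntegrable _ _)
  rw [h1, h2] at key
  simp only [mul_zero, zero_sub, zero_mul, sub_zero, zero_mul, mul_zero] at key
  have h1s : (1:ℂ) - s = -s + 1 := by ring
  have : ∫ x in (1:ℝ)..2, (x:ℂ) ^ (-s + 1) / (-s + 1) * deriv W x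
      = (-s + 1)⁻¹ * ∫ x in (1:ℝ)..2, (x:ℂ) ^ (-s + 1) * deriv W x := by
    rw [← intervalIntegral.integral_const_mul]
    congr 1; funext x; ring
  rw [this] at key
  have hsum : (0:ℂ) - (-s + 1)⁻¹ * ∫ x in (1:ℝ)..2, (x:ℂ) ^ (-s + 1) * deriv W x
      = (s - 1)⁻¹ * ∫ x in (1:ℝ)..2, (x:ℂ) ^ ((1:ℂ) - s) * deriv W x := by
    rw [h1s]
    have : (s - 1)⁻¹ = -(-s + 1)⁻¹ := by
      rw [← inv_neg]; ring_nf
    rw [this]; ring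
  -- key : 0 - (inv * ∫ ...) = ∫ x^(-s) * W  (after rearrangement)
  have key' : ∫ x in (1:ℝ)..2, (x:ℂ) ^ (-s) * W x
      = (0:ℂ) - (-s + 1)⁻¹ * ∫ x in (1:ℝ)..2, (x:ℂ) ^ (-s + 1) * deriv W x := by
    linear_combination key
  rw [key', hsum]

/-- iterated integration by parts -/
private lemma aux_key (B : ℕ) :
    ∀ (W : ℝ → ℂ), ContDiff ℝ ((⊤:ℕ∞):WithTop ℕ∞) W → Function.support W ⊆ Set.Icc 1 2 →
    ∀ s : ℂ, (∀ j ∈ Finset.range B, ((j:ℂ) + 1) ≠ s) →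
    ∫ x in (1:ℝ)..2, (x:ℂ) ^ (-s) * W x
      = (∏ j ∈ Finset.range B, (s - ((j:ℂ) + 1)))⁻¹ *
          ∫ x in (1:ℝ)..2, (x:ℂ) ^ ((B:ℂ) - s) * iteratedDeriv B W x := by
  induction B with
  | zero =>
      intro W hW hsupp s hs
      simp [iteratedDeriv_zero, zero_sub]
  | succ n ih =>
      intro W hW hsupp s hs
      obtain ⟨h1, h2⟩ := aux_boundary_zero hW.continuous hsupp
      have hs1 : s ≠ 1 := fun h => (hs 0 (Finset.mem_range.mpr (Nat.succ_pos n))) (by simp [h])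
      rw [aux_ibp W hW h1 h2 s hs1]
      have hW' : ContDiff ℝ ((⊤:ℕ∞):WithTop ℕ∞) (deriv W) := (contDiff_infty_iff_deriv.mp hW).2
      have hsupp' := aux_support_deriv hsupp
      have hone : (1:ℂ) - s = -(s - 1) := by ring
      rw [hone]
      rw [ih (deriv W) hW' hsupp' (s - 1)
        (fun j hj => by
          have := hs (j + 1) (Finset.mem_range.mpr (Nat.succ_lt_succ (Finset.mem_range.mp hj)))
          intro h; apply this
          push_cast
          linear_combination h)]
      rw [← iteratedDeriv_succ']
      have hcast : (n:ℂ) - (s - 1) = ((n + 1 : ℕ) : ℂ) - s := by push_cast; ring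
      have hprod : (s - 1)⁻¹ * (∏ j ∈ Finset.range n, (s - 1 - ((j:ℂ) + 1)))⁻¹
          = (∏ j ∈ Finset.range (n + 1), (s - ((j:ℂ) + 1)))⁻¹ := by
        have hpe : (∏ k ∈ Finset.range n, (s - (((k + 1 : ℕ) : ℂ) + 1)))
            = ∏ j ∈ Finset.range n, (s - 1 - ((j:ℂ) + 1)) :=
          Finset.prod_congr rfl (fun j _ => by push_cast; ring)
        have h0 : s - (((0 : ℕ) : ℂ) + 1) = s - 1 := by norm_num
        rw [Finset.prod_range_succ' (fun j => s - ((j:ℂ) + 1)) n, hpe, h0, mul_inv, mul_comm]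
      rw [hcast, ← mul_assoc, hprod]

/-- Mellin transform decay via repeated integration by parts: if `W` is smooth with
support in `[1, 2]` and `s ∉ {1, …, B}`, then
`|∫_1^2 x^{-s} W(x) dx| ≤ (1 + 2^{B - σ}) ⬝ sup_{[1,2]} |W^{(B)}| / ∏_{j=1}^B |j - s|`. -/
theorem mellin_decay_integration_by_parts
    (B : ℕ) (hB : 0 < B) (W : ℝ → ℂ) (hW : ContDiff ℝ (⊤ : ℕ∞) W)
    (hsupp : Function.support W ⊆ Set.Icc 1 2)
    (s : ℂ) (hs : ∀ j ∈ Finset.Icc 1 B, (j : ℂ) ≠ s) :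
    ‖∫ x in (1:ℝ)..2, (x : ℂ) ^ (-s) * W x‖ ≤
      (1 + (2 : ℝ) ^ ((B : ℝ) - s.re)) *
        sSup ((fun x => ‖iteratedDeriv B W x‖) '' Set.Icc (1:ℝ) 2) /
        ∏ j ∈ Finset.Icc 1 B, ‖(j : ℂ) - s‖ := by
  have hW' : ContDiff ℝ ((⊤:ℕ∞):WithTop ℕ∞) W := hW.of_le (by simp)
  have hs' : ∀ j ∈ Finset.range B, ((j:ℂ) + 1) ≠ s := by
    intro j hj
    have := hs (j + 1) (Finset.mem_Icc.mpr ⟨Nat.le_add_left 1 j, Finset.mem_range.mp hj⟩)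
    push_cast at this
    exact this
  rw [aux_key B W hW' hsupp s hs', norm_mul, norm_inv, norm_prod]
  set A : ℝ := 1 + (2 : ℝ) ^ ((B : ℝ) - s.re) with hA
  set M : ℝ := sSup ((fun x => ‖iteratedDeriv B W x‖) '' Set.Icc (1:ℝ) 2) with hM
  have hcont : Continuous fun x => ‖iteratedDeriv B W x‖ :=
    (hW.continuous_iteratedDeriv B (by exact_mod_cast le_top)).norm
  have hbdd : BddAbove ((fun x => ‖iteratedDeriv B W x‖) '' Set.Icc (1:ℝ) 2) :=
    (isCompact_Icc.image hcont).bddAbove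
  have hMnn : 0 ≤ M := le_trans (norm_nonneg (iteratedDeriv B W 1))
    (le_csSup hbdd ⟨1, by norm_num, rfl⟩)
  have hAnn : 0 ≤ A := by positivity
  have hI : ‖∫ x in (1:ℝ)..2, (x:ℂ) ^ ((B:ℂ) - s) * iteratedDeriv B W x‖ ≤ A * M := by
    have := intervalIntegral.norm_integral_le_of_norm_le_const
      (C := A * M) (f := fun x : ℝ => (x:ℂ) ^ ((B:ℂ) - s) * iteratedDeriv B W x)
      (a := 1) (b := 2) ?_
    · calc _ ≤ A * M * |2 - 1| := this
        _ = A * M := by norm_num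
    · intro x hx
      rw [Set.uIoc_of_le (by norm_num : (1:ℝ) ≤ 2)] at hx
      have hx0 : (0:ℝ) < x := lt_trans one_pos hx.1
      rw [norm_mul]
      have hcp : ‖(x:ℂ) ^ ((B:ℂ) - s)‖ = x ^ ((B:ℝ) - s.re) := by
        rw [Complex.norm_cpow_eq_rpow_re_of_pos hx0]
        norm_num
      rw [hcp]
      have hxA : x ^ ((B:ℝ) - s.re) ≤ A := by
        rcases le_or_gt 0 ((B:ℝ) - s.re) with h | h
        · calc x ^ ((B:ℝ) - s.re) ≤ 2 ^ ((B:ℝ) - s.re) :=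
                Real.rpow_le_rpow (le_of_lt hx0) hx.2 h
            _ ≤ A := le_add_of_nonneg_left zero_le_one
        · calc x ^ ((B:ℝ) - s.re) ≤ 1 :=
                Real.rpow_le_one_of_one_le_of_nonpos (le_of_lt hx.1) (le_of_lt h)
            _ ≤ A := le_add_of_nonneg_right (Real.rpow_nonneg (by norm_num) _)
      have hxM : ‖iteratedDeriv B W x‖ ≤ M :=
        le_csSup hbdd ⟨x, ⟨le_of_lt hx.1, hx.2⟩, rfl⟩
      exact mul_le_mul hxA hxM (norm_nonneg _) hAnn
  have hP : ∏ j ∈ Finset.Icc 1 B, ‖(j : ℂ) - s‖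
      = ∏ j ∈ Finset.range B, ‖s - ((j:ℂ) + 1)‖ := by
    rw [aux_prod_Icc_range (fun j => ‖(j : ℂ) - s‖) B]
    exact Finset.prod_congr rfl (fun j _ => by rw [norm_sub_rev]; push_cast; ring_nf)
  rw [hP, div_eq_mul_inv, mul_comm (A * M)]
  exact mul_le_mul_of_nonneg_left hI (inv_nonneg.mpr (Finset.prod_nonneg fun j _ => norm_nonneg _))
end
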